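/- arXiv:2209.02344 — 2 statements merged into one kernel-verified Lean document; each statement's English description precedes it below -/
import Mathlib

section
/- Let a > 0, γ > 2 and 0 < ρ̲ ≤ ρ̄ be real numbers. Then there exists a constant C > 0, depending only on a, γ, ρ̲, ρ̄, such that for every ρ with 0 ≤ ρ ≤ ρ̄ and every r with ρ̲ ≤ r ≤ ρ̄ one has |ρ − r|^γ ≤ C · E_P(ρ|r), where E_P(ρ|r) = P(ρ) − P'(r)(ρ − r) − P(r) and P(ρ) = a ρ^γ/(γ−1). -/
/-- Pressure potential `P(ρ) = a ρ^γ / (γ - 1)` (real power). -/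
noncomputable def Ppot (a γ ρ : ℝ) : ℝ := a * ρ ^ γ / (γ - 1)

/-- Derivative of the pressure potential, `P'(r) = a γ r^(γ-1) / (γ - 1)`. -/
noncomputable def dPpot (a γ r : ℝ) : ℝ := a * γ * r ^ (γ - 1) / (γ - 1)

/-- Relative pressure potential `E_P(ρ|r) = P(ρ) - P'(r)(ρ - r) - P(r)`. -/
noncomputable def EP (a γ ρ r : ℝ) : ℝ :=
  Ppot a γ ρ - dPpot a γ r * (ρ - r) - Ppot a γ r

/-! Writing `B(ρ|r) = ρ^γ - γ r^(γ-1) (ρ - r) - r^γ`, we have `E_P = a/(γ-1) · B`, so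
`C = (γ-1)/a` works once `|ρ - r|^γ ≤ B(ρ|r)`. For `ρ = r ± t` the difference `B - t^γ`
vanishes at `t = 0`, and its `t`-derivative is `γ` times `±((r ± t)^(γ-1) - r^(γ-1)) - t^(γ-1)`,
which is nonnegative by superadditivity of `s ↦ s^(γ-1)` on `[0, ∞)`, as `γ - 1 ≥ 1`. -/

section RpowBregman

variable {γ r t : ℝ}

lemma rpow_le_rpow_add_sub_rpow_sub_mul (hγ : 2 ≤ γ) (hr : 0 ≤ r) (ht : 0 ≤ t) :
    t ^ γ ≤ (r + t) ^ γ - r ^ γ - γ * r ^ (γ - 1) * t := by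
  have hγ1 : 1 ≤ γ := by linarith
  let f : ℝ → ℝ := fun x => (r + x) ^ γ - r ^ γ - γ * r ^ (γ - 1) * x - x ^ γ
  have hf : ∀ x, HasDerivAt f (γ * ((r + x) ^ (γ - 1) - r ^ (γ - 1) - x ^ (γ - 1))) x := fun x =>
    (((((hasDerivAt_id' x).const_add r).rpow_const (Or.inr hγ1)).sub_const _).sub
      ((hasDerivAt_id' x).const_mul _) |>.sub
      ((hasDerivAt_id' x).rpow_const (Or.inr hγ1))).congr_deriv (by ring)
  have hmono : MonotoneOn f (Set.Ici 0) := by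
    refine monotoneOn_of_hasDerivWithinAt_nonneg (convex_Ici 0)
      (fun x _ => (hf x).continuousAt.continuousWithinAt) (fun x _ => (hf x).hasDerivWithinAt)
      fun x hx => mul_nonneg (by linarith) ?_
    rw [interior_Ici] at hx
    linarith [Real.add_rpow_le_rpow_add hr hx.le (by linarith : 1 ≤ γ - 1)]
  have hf0 : f 0 = 0 := by simp [f, Real.zero_rpow (by linarith : γ ≠ 0)]
  exact sub_nonneg.mp (hf0 ▸ hmono Set.self_mem_Ici ht ht)

lemma rpow_le_rpow_sub_sub_rpow_add_mul (hγ : 2 ≤ γ) (ht : 0 ≤ t) (htr : t ≤ r) :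
    t ^ γ ≤ (r - t) ^ γ - r ^ γ + γ * r ^ (γ - 1) * t := by
  have hγ1 : 1 ≤ γ := by linarith
  let f : ℝ → ℝ := fun x => (r - x) ^ γ - r ^ γ + γ * r ^ (γ - 1) * x - x ^ γ
  have hf : ∀ x, HasDerivAt f (γ * (r ^ (γ - 1) - (r - x) ^ (γ - 1) - x ^ (γ - 1))) x := fun x =>
    (((((hasDerivAt_id' x).const_sub r).rpow_const (Or.inr hγ1)).sub_const _).add
      ((hasDerivAt_id' x).const_mul _) |>.sub
      ((hasDerivAt_id' x).rpow_const (Or.inr hγ1))).congr_deriv (by ring)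
  have hmono : MonotoneOn f (Set.Icc 0 r) := by
    refine monotoneOn_of_hasDerivWithinAt_nonneg (convex_Icc 0 r)
      (fun x _ => (hf x).continuousAt.continuousWithinAt) (fun x _ => (hf x).hasDerivWithinAt)
      fun x hx => mul_nonneg (by linarith) ?_
    rw [interior_Icc] at hx
    have := Real.add_rpow_le_rpow_add (by linarith [hx.2] : 0 ≤ r - x) hx.1.le
      (by linarith : 1 ≤ γ - 1)
    rw [sub_add_cancel] at this
    linarith
  have hf0 : f 0 = 0 := by simp [f, Real.zero_rpow (by linarith : γ ≠ 0)]
  exact sub_nonneg.mp (hf0 ▸ hmono ⟨le_rfl, ht.trans htr⟩ ⟨ht, htr⟩ ht)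

lemma abs_sub_rpow_le_rpow_sub_mul_sub_sub_rpow {ρ : ℝ} (hγ : 2 ≤ γ) (hr : 0 ≤ r) (hρ : 0 ≤ ρ) :
    |ρ - r| ^ γ ≤ ρ ^ γ - γ * r ^ (γ - 1) * (ρ - r) - r ^ γ := by
  rcases le_total r ρ with hrρ | hρr
  · have := rpow_le_rpow_add_sub_rpow_sub_mul hγ hr (sub_nonneg.2 hrρ)
    rw [add_sub_cancel] at this
    rw [abs_of_nonneg (sub_nonneg.2 hrρ)]
    linarith
  · have := rpow_le_rpow_sub_sub_rpow_add_mul hγ (sub_nonneg.2 hρr) (sub_le_self r hρ)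
    rw [sub_sub_cancel] at this
    rw [abs_of_nonpos (sub_nonpos.2 hρr), neg_sub]
    linarith

end RpowBregman

lemma EP_eq_div_mul (a γ ρ r : ℝ) :
    EP a γ ρ r = a / (γ - 1) * (ρ ^ γ - γ * r ^ (γ - 1) * (ρ - r) - r ^ γ) := by
  unfold EP Ppot dPpot
  ring

theorem abs_rpow_le_relative_pressure_potential_general
    (a γ ρmin ρmax : ℝ) (ha : 0 < a) (hγ : 2 < γ)
    (h0 : 0 < ρmin) :
    ∃ C : ℝ, 0 < C ∧ ∀ ρ r : ℝ, 0 ≤ ρ → ρ ≤ ρmax → ρmin ≤ r → r ≤ ρmax →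
      |ρ - r| ^ γ ≤ C * EP a γ ρ r := by
  refine ⟨(γ - 1) / a, div_pos (by linarith) ha, fun ρ r hρ _ hr _ => ?_⟩
  have hC : (γ - 1) / a * (a / (γ - 1)) = 1 := by
    field_simp [ha.ne', (by linarith : γ - 1 ≠ 0)]
  rw [EP_eq_div_mul, ← mul_assoc, hC, one_mul]
  exact abs_sub_rpow_le_rpow_sub_mul_sub_sub_rpow hγ.le (h0.le.trans hr) hρ

/-- γ-power coercivity of the relative pressure potential for `γ > 2`:
for `a > 0`, `γ > 2` and `0 < ρmin ≤ ρmax` there is `C > 0`, depending only on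
`a, γ, ρmin, ρmax`, such that `|ρ - r|^γ ≤ C · E_P(ρ|r)` whenever `0 ≤ ρ ≤ ρmax` and
`ρmin ≤ r ≤ ρmax`. -/
theorem abs_rpow_le_relative_pressure_potential
    (a γ ρmin ρmax : ℝ) (ha : 0 < a) (hγ : 2 < γ)
    (h0 : 0 < ρmin) (hle : ρmin ≤ ρmax) :
    ∃ C : ℝ, 0 < C ∧ ∀ ρ r : ℝ, 0 ≤ ρ → ρ ≤ ρmax → ρmin ≤ r → r ≤ ρmax →
      |ρ - r| ^ γ ≤ C * EP a γ ρ r :=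
  abs_rpow_le_relative_pressure_potential_general a γ ρmin ρmax ha hγ h0
end

section
/- Let d ≥ 1 be a natural number and let a > 0, γ > 1, 0 < ρ̲ ≤ ρ̄ and ū > 0 be real numbers. Then there exists a constant C > 0, depending only on a, γ, ρ̲, ρ̄, ū, such that for every ρ with 0 ≤ ρ ≤ ρ̄, every r with ρ̲ ≤ r ≤ ρ̄, and every pair of vectors u, U ∈ ℝ^d with ‖U‖ ≤ ū, one has ‖ρu − rU‖² ≤ C ( ρ ‖u − U‖² + E_P(ρ|r) ), where E_P(ρ|r) = P(ρ) − P'(r)(ρ − r) − P(r) and P(ρ) = a ρ^γ/(γ−1). -/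
/-!
Write `E_P(ρ|r) = a/(γ-1) · D(ρ, r)`, where `D` is the Bregman divergence of `t ↦ t^γ`.
On an interval `[lo, hi]` with `lo > 0` the second derivative of `t^γ` is bounded below by some
`m > 0`, so `t^γ - m t²/2` is convex and its tangent-line inequality gives `D(ρ, r) ≥ m (ρ - r)²/2`.
For `ρ < ρmin/2` one uses instead that `D(·, r)` decreases on `[0, r]`, so
`D(ρ, r) ≥ D(ρmin/2, r)`, and `r - ρmin/2` is comparable to `r - ρ`. Hence `E_P(ρ|r) ≳ (ρ - r)²`,
and the theorem follows from `ρu - rU = ρ(u - U) + (ρ - r)U`.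
-/

open Real Set

lemma ConvexOn.add_mul_sub_le_of_hasDerivAt {S : Set ℝ} {f : ℝ → ℝ} {f' x y : ℝ}
    (hf : ConvexOn ℝ S f) (hx : x ∈ S) (hy : y ∈ S) (hf' : HasDerivAt f f' x) :
    f x + f' * (y - x) ≤ f y := by
  rcases lt_trichotomy x y with hxy | rfl | hxy
  · have h := hf.le_slope_of_hasDerivAt hx hy hxy hf'
    rw [slope_def_field, le_div_iff₀ (sub_pos.2 hxy)] at h
    linarith
  · simp
  · have h := hf.slope_le_of_hasDerivAt hy hx hxy hf'
    rw [slope_def_field, div_le_iff₀ (sub_pos.2 hxy)] at h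
    linarith

lemma Real.min_rpow_le_rpow_of_mem_Icc {lo hi t : ℝ} (p : ℝ) (hlo : 0 < lo) (ht : t ∈ Icc lo hi) :
    min (lo ^ p) (hi ^ p) ≤ t ^ p := by
  rcases le_total 0 p with hp | hp
  · exact (min_le_left _ _).trans (rpow_le_rpow hlo.le ht.1 hp)
  · exact (min_le_right _ _).trans (rpow_le_rpow_of_nonpos (hlo.trans_le ht.1) ht.2 hp)

noncomputable def rpowBregman (γ ρ r : ℝ) : ℝ := ρ ^ γ - r ^ γ - γ * r ^ (γ - 1) * (ρ - r)

lemma sq_le_rpowBregman {γ lo hi ρ r : ℝ} (hγ : 1 < γ) (hlo : 0 < lo)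
    (hρ : ρ ∈ Icc lo hi) (hr : r ∈ Icc lo hi) :
    γ * (γ - 1) * min (lo ^ (γ - 2)) (hi ^ (γ - 2)) / 2 * (ρ - r) ^ 2 ≤ rpowBregman γ ρ r := by
  set m := γ * (γ - 1) * min (lo ^ (γ - 2)) (hi ^ (γ - 2))
  have hderiv (x : ℝ) :
      HasDerivAt (fun t : ℝ => t ^ γ - m / 2 * t ^ 2) (γ * x ^ (γ - 1) - m * x) x :=
    ((hasDerivAt_rpow_const (Or.inr hγ.le)).sub ((hasDerivAt_pow 2 x).const_mul (m / 2))).congr_deriv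
      (by ring)
  have hderiv2 {x : ℝ} (hx : x ≠ 0) :
      HasDerivAt (fun t : ℝ => γ * t ^ (γ - 1) - m * t) (γ * ((γ - 1) * x ^ (γ - 2)) - m) x := by
    have h := hasDerivAt_rpow_const (p := γ - 1) (Or.inl hx)
    rw [show γ - 1 - 1 = γ - 2 by ring] at h
    exact (h.const_mul γ).sub ((hasDerivAt_id x).const_mul m |>.congr_deriv (mul_one m))
  have hconvex : ConvexOn ℝ (Icc lo hi) (fun t : ℝ => t ^ γ - m / 2 * t ^ 2) := by
    refine convexOn_of_hasDerivWithinAt2_nonneg (convex_Icc lo hi)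
      (fun x hx => (hderiv x).continuousAt.continuousWithinAt)
      (fun x _ => (hderiv x).hasDerivWithinAt)
      (fun x hx => (hderiv2 ?_).hasDerivWithinAt) (fun x hx => ?_)
    all_goals rw [interior_Icc] at hx
    · exact (hlo.trans hx.1).ne'
    · have h := Real.min_rpow_le_rpow_of_mem_Icc (γ - 2) hlo (Ioo_subset_Icc_self hx)
      have hγ' : 0 ≤ γ * (γ - 1) := mul_nonneg (by linarith) (by linarith)
      nlinarith [mul_le_mul_of_nonneg_left h hγ']
  have h := hconvex.add_mul_sub_le_of_hasDerivAt hr hρ (hderiv r)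
  unfold rpowBregman
  linear_combination h

lemma rpowBregman_le_of_le {γ ρ ρ' r : ℝ} (hγ : 1 ≤ γ) (hρ : 0 ≤ ρ) (hρρ' : ρ ≤ ρ')
    (hρ'r : ρ' ≤ r) : rpowBregman γ ρ' r ≤ rpowBregman γ ρ r := by
  have htangent := (convexOn_rpow hγ).add_mul_sub_le_of_hasDerivAt
    (hρ.trans hρρ' : 0 ≤ ρ') hρ (hasDerivAt_rpow_const (Or.inr hγ))
  have hslope : ρ' ^ (γ - 1) ≤ r ^ (γ - 1) :=
    rpow_le_rpow (hρ.trans hρρ') hρ'r (by linarith)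
  unfold rpowBregman
  nlinarith [mul_nonneg (mul_nonneg (by linarith : 0 ≤ γ) (sub_nonneg.2 hslope))
    (sub_nonneg.2 hρρ')]

lemma exists_sq_le_rpowBregman {γ ρmin ρmax : ℝ} (hγ : 1 < γ) (h0 : 0 < ρmin)
    (hle : ρmin ≤ ρmax) :
    ∃ κ > 0, ∀ ρ r : ℝ, 0 ≤ ρ → ρ ≤ ρmax → ρmin ≤ r → r ≤ ρmax →
      κ * (ρ - r) ^ 2 ≤ rpowBregman γ ρ r := by
  set lo := ρmin / 2 with hlo_def
  have hlo : 0 < lo := by positivity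
  set m := γ * (γ - 1) * min (lo ^ (γ - 2)) (ρmax ^ (γ - 2))
  have hm : 0 < m := by
    have : 0 < ρmax := h0.trans_le hle
    have : 0 < γ - 1 := by linarith
    positivity
  refine ⟨m / 8, by positivity, fun ρ r hρ0 hρ hr0 hr => ?_⟩
  have hr' : r ∈ Icc lo ρmax := ⟨by linarith [hlo_def], hr⟩
  rcases le_total lo ρ with hloρ | hρlo
  · have h := sq_le_rpowBregman hγ hlo ⟨hloρ, hρ⟩ hr'
    nlinarith [mul_nonneg hm.le (sq_nonneg (ρ - r))]
  · -- `r - ρmin/2 ≥ r/2 ≥ (r - ρ)/2`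
    have hsq : (ρ - r) ^ 2 ≤ 4 * (lo - r) ^ 2 := by nlinarith [hlo_def]
    calc m / 8 * (ρ - r) ^ 2 ≤ m / 2 * (lo - r) ^ 2 := by nlinarith
      _ ≤ rpowBregman γ lo r := sq_le_rpowBregman hγ hlo ⟨le_rfl, by linarith [hlo_def]⟩ hr'
      _ ≤ rpowBregman γ ρ r := rpowBregman_le_of_le hγ.le hρ0 hρlo (by linarith [hlo_def])

lemma EP_eq_mul_rpowBregman (a : ℝ) {γ : ℝ} (hγ : 1 < γ) (ρ r : ℝ) :
    EP a γ ρ r = a / (γ - 1) * rpowBregman γ ρ r := by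
  have h : γ - 1 ≠ 0 := by linarith
  unfold EP Ppot dPpot rpowBregman
  field_simp
  ring

lemma exists_sq_le_EP {a γ ρmin ρmax : ℝ} (ha : 0 < a) (hγ : 1 < γ) (h0 : 0 < ρmin)
    (hle : ρmin ≤ ρmax) :
    ∃ c > 0, ∀ ρ r : ℝ, 0 ≤ ρ → ρ ≤ ρmax → ρmin ≤ r → r ≤ ρmax →
      c * (ρ - r) ^ 2 ≤ EP a γ ρ r := by
  obtain ⟨κ, hκ, hgap⟩ := exists_sq_le_rpowBregman hγ h0 hle
  have ha' : 0 < a / (γ - 1) := div_pos ha (by linarith)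
  refine ⟨a / (γ - 1) * κ, by positivity, fun ρ r hρ0 hρ hr0 hr => ?_⟩
  rw [EP_eq_mul_rpowBregman a hγ, mul_assoc]
  exact mul_le_mul_of_nonneg_left (hgap ρ r hρ0 hρ hr0 hr) ha'.le

lemma norm_smul_sub_smul_sq_le {E : Type*} [SeminormedAddCommGroup E] [NormedSpace ℝ E]
    (ρ r : ℝ) (u U : E) :
    ‖ρ • u - r • U‖ ^ 2 ≤ 2 * (ρ ^ 2 * ‖u - U‖ ^ 2) + 2 * ((ρ - r) ^ 2 * ‖U‖ ^ 2) := by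
  have hsplit : ρ • u - r • U = ρ • (u - U) + (ρ - r) • U := by module
  calc ‖ρ • u - r • U‖ ^ 2 ≤ (‖ρ • (u - U)‖ + ‖(ρ - r) • U‖) ^ 2 := by
        rw [hsplit]; gcongr; exact norm_add_le _ _
    _ ≤ 2 * (‖ρ • (u - U)‖ ^ 2 + ‖(ρ - r) • U‖ ^ 2) := add_sq_le
    _ = 2 * (ρ ^ 2 * ‖u - U‖ ^ 2) + 2 * ((ρ - r) ^ 2 * ‖U‖ ^ 2) := by
        rw [norm_smul, norm_smul, mul_pow, mul_pow, Real.norm_eq_abs, Real.norm_eq_abs, sq_abs,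
          sq_abs]
        ring

theorem momentum_sq_le_relative_energy_general
    (d : ℕ) (a γ ρmin ρmax ub : ℝ) (ha : 0 < a) (hγ : 1 < γ)
    (h0 : 0 < ρmin) (hle : ρmin ≤ ρmax) :
    ∃ C : ℝ, 0 < C ∧ ∀ (ρ r : ℝ) (u U : EuclideanSpace ℝ (Fin d)),
      0 ≤ ρ → ρ ≤ ρmax → ρmin ≤ r → r ≤ ρmax → ‖U‖ ≤ ub →
      ‖ρ • u - r • U‖ ^ 2 ≤ C * (ρ * ‖u - U‖ ^ 2 + EP a γ ρ r) := by
  obtain ⟨c, hc, hgap⟩ := exists_sq_le_EP ha hγ h0 hle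
  have hρmax : 0 < ρmax := h0.trans_le hle
  refine ⟨2 * ρmax + 2 * ub ^ 2 / c, by positivity, fun ρ r u U hρ0 hρ hr0 hr hU => ?_⟩
  have hEP := hgap ρ r hρ0 hρ hr0 hr
  have hkin : ρ ^ 2 * ‖u - U‖ ^ 2 ≤ ρmax * (ρ * ‖u - U‖ ^ 2) := by
    rw [sq ρ, mul_assoc]
    gcongr
  have hpot : (ρ - r) ^ 2 * ‖U‖ ^ 2 ≤ ub ^ 2 / c * EP a γ ρ r :=
    calc (ρ - r) ^ 2 * ‖U‖ ^ 2 ≤ ub ^ 2 / c * (c * (ρ - r) ^ 2) := by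
          rw [← mul_assoc, div_mul_cancel₀ _ hc.ne', mul_comm]
          gcongr
      _ ≤ ub ^ 2 / c * EP a γ ρ r := by gcongr
  have hkin_nonneg : 0 ≤ ub ^ 2 / c * (ρ * ‖u - U‖ ^ 2) := by positivity
  have hpot_nonneg : 0 ≤ ρmax * EP a γ ρ r :=
    mul_nonneg hρmax.le ((by positivity : 0 ≤ c * (ρ - r) ^ 2).trans hEP)
  calc ‖ρ • u - r • U‖ ^ 2 ≤ 2 * (ρ ^ 2 * ‖u - U‖ ^ 2) + 2 * ((ρ - r) ^ 2 * ‖U‖ ^ 2) :=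
        norm_smul_sub_smul_sq_le ρ r u U
    _ ≤ 2 * (ρmax * (ρ * ‖u - U‖ ^ 2)) + 2 * (ub ^ 2 / c * EP a γ ρ r) := by gcongr
    _ ≤ (2 * ρmax + 2 * ub ^ 2 / c) * (ρ * ‖u - U‖ ^ 2 + EP a γ ρ r) := by
        linear_combination 2 * hpot_nonneg + 2 * hkin_nonneg

/-- Momentum error bound by the relative energy integrand: for `d ≥ 1`, `a > 0`, `γ > 1`,
`0 < ρmin ≤ ρmax` and `ub > 0` there exists `C > 0`, depending only on
`a, γ, ρmin, ρmax, ub`, such that for all `0 ≤ ρ ≤ ρmax`, `ρmin ≤ r ≤ ρmax` and vectors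
`u, U ∈ ℝ^d` with `‖U‖ ≤ ub`, one has `‖ρu - rU‖² ≤ C (ρ ‖u - U‖² + E_P(ρ|r))`. -/
theorem momentum_sq_le_relative_energy
    (d : ℕ) (hd : 1 ≤ d) (a γ ρmin ρmax ub : ℝ) (ha : 0 < a) (hγ : 1 < γ)
    (h0 : 0 < ρmin) (hle : ρmin ≤ ρmax) (hub : 0 < ub) :
    ∃ C : ℝ, 0 < C ∧ ∀ (ρ r : ℝ) (u U : EuclideanSpace ℝ (Fin d)),
      0 ≤ ρ → ρ ≤ ρmax → ρmin ≤ r → r ≤ ρmax → ‖U‖ ≤ ub →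
      ‖ρ • u - r • U‖ ^ 2 ≤ C * (ρ * ‖u - U‖ ^ 2 + EP a γ ρ r) :=
  momentum_sq_le_relative_energy_general d a γ ρmin ρmax ub ha hγ h0 hle
end
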